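/- arXiv:1911.06709 — 7 statements merged into one kernel-verified Lean document; each statement's English description precedes it below -/
import Mathlib

section
/- Let n ≥ 1 and let G be a finite subgroup of GL(n, ℝ), acting on ℝⁿ by matrix–vector multiplication. Suppose h : ℝⁿ → ℝⁿ is continuously differentiable and for every x ∈ ℝⁿ there exists γ ∈ G with h(x) = γ·x (i.e., h is a lift of the identity map of the quotient ℝⁿ/G). Then there exists a single element γ ∈ G such that h(x) = γ·x for every x ∈ ℝⁿ; in particular h is a diffeomorphism. -/
/-!
By Baire, the interiors of the closed sets `{x | h x = γ x}` have dense union, and on the interior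
of such a set `Dh = γ`. By continuity `Dh` then takes values in the finite, hence discrete, set `G`
everywhere; on the connected space `ℝⁿ` it is therefore a constant `γ`, and `h = γ` because
both vanish at `0`.
-/

open Set

section FiniteFamily

variable {E F : Type*} [NormedAddCommGroup E] [NormedSpace ℝ E] [CompleteSpace E]
  [NormedAddCommGroup F] [NormedSpace ℝ F] {ι : Type*} [Finite ι]

theorem fderiv_mem_range_of_forall_exists_eq_apply (L : ι → E →L[ℝ] F) {h : E → F}
    (hh : Continuous h) (hh' : Continuous (fderiv ℝ h)) (hpt : ∀ x, ∃ i, h x = L i x) (x : E) :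
    fderiv ℝ h x ∈ range L := by
  let A : ι → Set E := fun i => {y | h y = L i y}
  have hdense : Dense (⋃ i, interior (A i)) :=
    dense_iUnion_interior_of_closed (fun i => isClosed_eq hh (L i).continuous)
      (iUnion_eq_univ_iff.mpr hpt)
  have hinterior : fderiv ℝ h '' ⋃ i, interior (A i) ⊆ range L := by
    rintro _ ⟨y, hy, rfl⟩
    obtain ⟨i, hy⟩ := mem_iUnion.mp hy
    have hloc : h =ᶠ[nhds y] L i := mem_interior_iff_mem_nhds.mp hy
    exact ⟨i, by rw [hloc.fderiv_eq, (L i).fderiv]⟩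
  have hclosure := hh'.continuousWithinAt.mem_closure_image (hdense x)
  exact (finite_range L).isClosed.closure_subset_iff.mpr hinterior hclosure

theorem ContDiff.exists_eq_of_forall_exists_eq_apply (L : ι → E →L[ℝ] F) {h : E → F}
    (hh : ContDiff ℝ 1 h) (hpt : ∀ x, ∃ i, h x = L i x) : ∃ i, h = L i := by
  have hh' : Continuous (fderiv ℝ h) := hh.continuous_fderiv one_ne_zero
  have hrange := fderiv_mem_range_of_forall_exists_eq_apply L hh.continuous hh' hpt
  have hconst : ∀ x, fderiv ℝ h x = fderiv ℝ h 0 := fun x =>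
    isPreconnected_univ.constant_of_mapsTo (finite_range L).isDiscrete hh'.continuousOn
      (fun y _ => hrange y) (mem_univ x) (mem_univ 0)
  obtain ⟨i, hi⟩ := hrange 0
  have hzero : h 0 = L i 0 := by
    obtain ⟨j, hj⟩ := hpt 0
    rw [hj, map_zero, map_zero]
  refine ⟨i, eq_of_fderiv_eq (hh.differentiable one_ne_zero) (L i).differentiable
    (fun x => ?_) 0 hzero⟩
  rw [hconst x, ← hi, (L i).fderiv]

end FiniteFamily

theorem lift_of_identity_is_group_element_general
    (n : ℕ) (G : Subgroup (GL (Fin n) ℝ)) [Finite G]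
    (h : (Fin n → ℝ) → (Fin n → ℝ)) (hC1 : ContDiff ℝ 1 h)
    (hlift : ∀ x : Fin n → ℝ, ∃ γ ∈ G,
      h x = Matrix.mulVec ((γ : GL (Fin n) ℝ) : Matrix (Fin n) (Fin n) ℝ) x) :
    (∃ γ ∈ G, ∀ x : Fin n → ℝ,
      h x = Matrix.mulVec ((γ : GL (Fin n) ℝ) : Matrix (Fin n) (Fin n) ℝ) x) ∧
    Function.Bijective h := by
  let L : G → (Fin n → ℝ) →L[ℝ] (Fin n → ℝ) := fun γ =>
    LinearMap.toContinuousLinearMap (Matrix.mulVecLin ((γ : GL (Fin n) ℝ) : Matrix _ _ ℝ))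
  obtain ⟨γ, hγ⟩ := hC1.exists_eq_of_forall_exists_eq_apply L fun x => by
    obtain ⟨γ, hγG, hx⟩ := hlift x
    exact ⟨⟨γ, hγG⟩, hx⟩
  have hunit : IsUnit ((γ : GL (Fin n) ℝ) : Matrix (Fin n) (Fin n) ℝ) := Units.isUnit _
  refine ⟨⟨γ, γ.2, fun x => congrFun hγ x⟩, ?_⟩
  rw [show h = Matrix.mulVec _ from hγ]
  exact ⟨Matrix.mulVec_injective_iff_isUnit.mpr hunit,
    Matrix.mulVec_surjective_iff_isUnit.mpr hunit⟩

/-- Any continuously differentiable lift of the identity map of the quotient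
ℝⁿ/G, where G is a finite subgroup of GL(n,ℝ) acting by matrix–vector multiplication,
coincides with the action of a single element of G; in particular it is a diffeomorphism. -/
theorem lift_of_identity_is_group_element
    (n : ℕ) (hn : 1 ≤ n) (G : Subgroup (GL (Fin n) ℝ)) [Finite G]
    (h : (Fin n → ℝ) → (Fin n → ℝ)) (hC1 : ContDiff ℝ 1 h)
    (hlift : ∀ x : Fin n → ℝ, ∃ γ ∈ G,
      h x = Matrix.mulVec ((γ : GL (Fin n) ℝ) : Matrix (Fin n) (Fin n) ℝ) x) :
    (∃ γ ∈ G, ∀ x : Fin n → ℝ,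
      h x = Matrix.mulVec ((γ : GL (Fin n) ℝ) : Matrix (Fin n) (Fin n) ℝ) x) ∧
    Function.Bijective h :=
  lift_of_identity_is_group_element_general n G h hC1 hlift
end

section
/- Let n ≥ 1 and let G be a finite subgroup of GL(n, ℝ), acting on ℝⁿ by matrix–vector multiplication. Let f : ℝⁿ → ℝⁿ be continuously differentiable and let f' : ℝⁿ → ℝⁿ be a bijection such that both f' and its inverse are continuously differentiable. Suppose that for every x ∈ ℝⁿ there exists μ ∈ G with f(x) = μ·f'(x). Then there exists a unique μ ∈ G such that f(x) = μ·f'(x) for all x ∈ ℝⁿ. -/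
/-!
Put `g = f ∘ f'⁻¹`, a C¹ map that agrees at every point with one of finitely many linear maps
`L μ`, `μ ∈ G`. The closed sets `{g = L μ}` cover the space, so by Baire their interiors are
dense; on them `Dg = L μ`, and since `Dg` is continuous and the set of the `L μ` is finite and
closed, `Dg` takes values in it everywhere. A continuous map from a connected space into a finite
set is constant, so `Dg` is constant and `g`, vanishing at `0`, is linear: `g = L μ₀`.
Uniqueness holds because `f'` is onto and a matrix is determined by its action on vectors.
-/

open Set

section
variable {E F ι : Type*} [NormedAddCommGroup E] [NormedSpace ℝ E]
  [NormedAddCommGroup F] [NormedSpace ℝ F] [Finite ι] {L : ι → E →L[ℝ] F} {g : E → F}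

theorem ContDiff.fderiv_mem_range_of_forall_exists_eq_apply [CompleteSpace E]
    (hg : ContDiff ℝ 1 g) (h : ∀ y, ∃ i, g y = L i y) (y : E) : fderiv ℝ g y ∈ range L := by
  have hclosed (i : ι) : IsClosed {y | g y = L i y} := isClosed_eq hg.continuous (L i).continuous
  have hcover : ⋃ i, {y | g y = L i y} = univ := eq_univ_of_forall fun y => mem_iUnion.2 (h y)
  have hsub : ⋃ i, interior {y | g y = L i y} ⊆ fderiv ℝ g ⁻¹' range L := by
    simp only [iUnion_subset_iff]
    intro i z hz
    have hev : g =ᶠ[nhds z] L i := mem_interior_iff_mem_nhds.1 hz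
    exact ⟨i, by rw [hev.fderiv_eq, (L i).fderiv]⟩
  have hdense := (dense_iUnion_interior_of_closed hclosed hcover).mono hsub
  exact ((finite_range L).isClosed.preimage (contDiff_one_iff_fderiv.1 hg).2).closure_subset
    (hdense y)

theorem ContDiff.exists_eq_of_forall_exists_eq_apply_s1 [CompleteSpace E]
    (hg : ContDiff ℝ 1 g) (h : ∀ y, ∃ i, g y = L i y) : ∃ i, g = L i := by
  obtain ⟨i, hi⟩ := hg.fderiv_mem_range_of_forall_exists_eq_apply h 0
  have hconst (y : E) : fderiv ℝ g y = L i :=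
    hi ▸ isPreconnected_univ.constant_of_mapsTo (finite_range L).isDiscrete
      (contDiff_one_iff_fderiv.1 hg).2.continuousOn
      (fun z _ => hg.fderiv_mem_range_of_forall_exists_eq_apply h z) trivial trivial
  refine ⟨i, eq_of_fderiv_eq (hg.differentiable one_ne_zero) (L i).differentiable
    (fun y => by rw [hconst, (L i).fderiv]) 0 ?_⟩
  obtain ⟨j, hj⟩ := h 0
  rw [hj, map_zero, map_zero]

end

theorem lifts_differ_by_unique_group_element_general
    (n : ℕ) (G : Subgroup (GL (Fin n) ℝ)) [Finite G]
    (f f' f'inv : (Fin n → ℝ) → (Fin n → ℝ))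
    (hf : ContDiff ℝ 1 f) (hf'inv : ContDiff ℝ 1 f'inv)
    (hleft : Function.LeftInverse f'inv f') (hright : Function.RightInverse f'inv f')
    (hlift : ∀ x : Fin n → ℝ, ∃ μ ∈ G,
      f x = Matrix.mulVec ((μ : GL (Fin n) ℝ) : Matrix (Fin n) (Fin n) ℝ) (f' x)) :
    ∃! μ : G, ∀ x : Fin n → ℝ,
      f x = Matrix.mulVec (((μ : GL (Fin n) ℝ)) : Matrix (Fin n) (Fin n) ℝ) (f' x) := by
  let L (μ : G) : (Fin n → ℝ) →L[ℝ] (Fin n → ℝ) :=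
    (Matrix.mulVecLin ((μ : GL (Fin n) ℝ) : Matrix (Fin n) (Fin n) ℝ)).toContinuousLinearMap
  have hg (y : Fin n → ℝ) : ∃ μ, (f ∘ f'inv) y = L μ y := by
    obtain ⟨μ, hμ, h⟩ := hlift (f'inv y)
    exact ⟨⟨μ, hμ⟩, by simpa [L, hright y] using h⟩
  obtain ⟨μ₀, hμ₀⟩ := (hf.comp hf'inv).exists_eq_of_forall_exists_eq_apply_s1 hg
  refine ⟨μ₀, fun x => by simpa [L, hleft x] using congrFun hμ₀ (f' x), fun ν hν => ?_⟩
  have hmulVec : Matrix.mulVec ((ν : GL (Fin n) ℝ) : Matrix (Fin n) (Fin n) ℝ) =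
      Matrix.mulVec ((μ₀ : GL (Fin n) ℝ) : Matrix (Fin n) (Fin n) ℝ) := funext fun y => by
    simpa [L, hright y] using (hν (f'inv y)).symm.trans (congrFun hμ₀ y)
  exact Subtype.ext (Units.ext (Matrix.mulVec_injective hmulVec))

/-- Two C¹ lifts of the same map differ by a unique element of the
finite linear group G: if f(x) = μ·f'(x) pointwise for varying μ ∈ G, then a single
μ ∈ G works for all x. -/
theorem lifts_differ_by_unique_group_element
    (n : ℕ) (hn : 1 ≤ n) (G : Subgroup (GL (Fin n) ℝ)) [Finite G]
    (f f' f'inv : (Fin n → ℝ) → (Fin n → ℝ))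
    (hf : ContDiff ℝ 1 f) (hf' : ContDiff ℝ 1 f') (hf'inv : ContDiff ℝ 1 f'inv)
    (hleft : Function.LeftInverse f'inv f') (hright : Function.RightInverse f'inv f')
    (hlift : ∀ x : Fin n → ℝ, ∃ μ ∈ G,
      f x = Matrix.mulVec ((μ : GL (Fin n) ℝ) : Matrix (Fin n) (Fin n) ℝ) (f' x)) :
    ∃! μ : G, ∀ x : Fin n → ℝ,
      f x = Matrix.mulVec (((μ : GL (Fin n) ℝ)) : Matrix (Fin n) (Fin n) ℝ) (f' x) :=
  lifts_differ_by_unique_group_element_general n G f f' f'inv hf hf'inv hleft hright hlift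
end

section
/- Let n ≥ 1 and let G and H be finite subgroups of GL(n, ℝ), acting on ℝⁿ by matrix–vector multiplication. Let f : ℝⁿ → ℝⁿ be a bijection such that f and f⁻¹ are continuously differentiable, and suppose: (i) for every γ ∈ G and every x ∈ ℝⁿ there exists μ ∈ H with f(γ·x) = μ·f(x); and (ii) for every μ ∈ H and every y ∈ ℝⁿ there exists γ ∈ G with f⁻¹(μ·y) = γ·f⁻¹(y). Then there exists a group isomorphism Θ : G → H such that f(γ·x) = Θ(γ)·f(x) for all γ ∈ G and all x ∈ ℝⁿ (i.e., f is Θ-equivariant). -/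
/-!
A C¹ map `g` that agrees at each point with one of finitely many linear maps `L` agrees with a
single one of them everywhere. By Baire, the closed sets `{g = L}` have interiors with dense
union; on them `fderiv g = L`, so the continuous map `fderiv g` takes values in a finite set on a
dense set, hence everywhere, hence is a constant `L` by connectedness, and then `g - L` is
constant and vanishes at `0`. Applied to `f ∘ γ ∘ f⁻¹` this makes the pointwise intertwiners
uniform, and faithfulness of the linear actions turns `γ ↦ μ` into an isomorphism `G ≃* H`.
-/

open Set

instance Matrix.faithfulSMul {n R : Type*} [Fintype n] [DecidableEq n] [Semiring R] :
    FaithfulSMul (Matrix n n R) (n → R) :=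
  ⟨Matrix.ext_iff_smul.mpr⟩

theorem ContDiff.exists_mem_eq_clm_of_forall_exists {E F : Type*} [NormedAddCommGroup E]
    [NormedSpace ℝ E] [CompleteSpace E] [NormedAddCommGroup F] [NormedSpace ℝ F]
    {g : E → F} (hg : ContDiff ℝ 1 g)
    {T : Set (E →L[ℝ] F)} (hT : T.Finite) (hgT : ∀ y, ∃ L ∈ T, g y = L y) :
    ∃ L ∈ T, ∀ y, g y = L y := by
  have hdense : Dense (⋃ L ∈ T, interior {y | g y = L y}) :=
    dense_biUnion_interior_of_closed (fun L _ => isClosed_eq hg.continuous L.continuous)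
      hT.countable (eq_univ_of_forall fun y => by simpa using hgT y)
  have hfderiv_mem : ∀ y, fderiv ℝ g y ∈ T := by
    have hsub : (⋃ L ∈ T, interior {y | g y = L y}) ⊆ fderiv ℝ g ⁻¹' T := by
      simp only [iUnion_subset_iff]
      intro L hL y hy
      have hloc : g =ᶠ[nhds y] L := mem_interior_iff_mem_nhds.mp hy
      rw [mem_preimage, hloc.fderiv_eq, L.fderiv]
      exact hL
    have := closure_minimal hsub (hT.isClosed.preimage (hg.continuous_fderiv one_ne_zero))
    exact fun y => this (hdense.closure_eq ▸ mem_univ y)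
  obtain ⟨L, hL, hconst⟩ := isPreconnected_univ.eqOn_const_of_mapsTo hT.isDiscrete
    (hg.continuous_fderiv one_ne_zero).continuousOn (fun y _ => hfderiv_mem y) ⟨_, hfderiv_mem 0⟩
  have hdiff : Differentiable ℝ (fun y => g y - L y) :=
    (hg.differentiable one_ne_zero).sub L.differentiable
  have hzero : ∀ y, fderiv ℝ (fun y => g y - L y) y = 0 := fun y => by
    rw [fderiv_fun_sub (hg.differentiable one_ne_zero y) L.differentiableAt, L.fderiv,
      hconst (mem_univ y), Function.const_apply, sub_self]
  obtain ⟨L₀, -, hL₀⟩ := hgT 0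
  refine ⟨L, hL, fun y => sub_eq_zero.mp ?_⟩
  rw [is_const_of_fderiv_eq_zero hdiff hzero y 0, hL₀, map_zero, map_zero, sub_self]

theorem Equiv.exists_forall_apply_eq_smul_of_forall_exists {E F H : Type*}
    [NormedAddCommGroup E] [NormedSpace ℝ E] [NormedAddCommGroup F] [NormedSpace ℝ F]
    [FiniteDimensional ℝ F] [Monoid H] [Finite H] [DistribMulAction H F] [SMulCommClass H ℝ F]
    (e : E ≃ F) (he : ContDiff ℝ 1 e) (he_symm : ContDiff ℝ 1 e.symm)
    {a : E → E} (ha : ContDiff ℝ 1 a)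
    (h : ∀ x, ∃ μ : H, e (a x) = μ • e x) : ∃ μ : H, ∀ x, e (a x) = μ • e x := by
  let L : H → F →L[ℝ] F := fun μ =>
    LinearMap.toContinuousLinearMap (DistribSMul.toLinearMap ℝ F μ)
  have hL : ∀ μ y, L μ y = μ • y := fun _ _ => rfl
  obtain ⟨_, ⟨μ, rfl⟩, hμ⟩ := (he.comp (ha.comp he_symm)).exists_mem_eq_clm_of_forall_exists
    (finite_range L) fun y => by
      obtain ⟨μ, hμ⟩ := h (e.symm y)
      exact ⟨L μ, mem_range_self μ, by simpa [hL] using hμ⟩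
  exact ⟨μ, fun x => by simpa [hL] using hμ (e x)⟩

theorem Equiv.exists_mulEquiv_of_forall_exists_smul {G H X Y : Type*} [Group G] [Group H]
    [MulAction G X] [MulAction H Y] [FaithfulSMul G X] [FaithfulSMul H Y] (e : X ≃ Y)
    (hG : ∀ g : G, ∃ h : H, ∀ x, e (g • x) = h • e x)
    (hH : ∀ h : H, ∃ g : G, ∀ y, e.symm (h • y) = g • e.symm y) :
    ∃ Θ : G ≃* H, ∀ g x, e (g • x) = Θ g • e x := by
  choose Φ hΦ using hG
  have hΦ_unique : ∀ g h, (∀ x, e (g • x) = h • e x) → Φ g = h := fun g h hgh =>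
    eq_of_smul_eq_smul fun y => by
      obtain ⟨x, rfl⟩ := e.surjective y
      rw [← hΦ, hgh]
  have hΦ_mul : ∀ g₁ g₂, Φ (g₁ * g₂) = Φ g₁ * Φ g₂ := fun g₁ g₂ =>
    hΦ_unique _ _ fun x => by rw [mul_smul, hΦ, hΦ, mul_smul]
  have hΦ_inj : Function.Injective Φ := fun g₁ g₂ h =>
    eq_of_smul_eq_smul fun x => e.injective (by rw [hΦ, hΦ, h])
  have hΦ_surj : Function.Surjective Φ := fun h => by
    obtain ⟨g, hg⟩ := hH h
    refine ⟨g, hΦ_unique g h fun x => ?_⟩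
    rw [← e.symm_apply_apply x, ← hg, e.apply_symm_apply, e.apply_symm_apply]
  exact ⟨MulEquiv.ofBijective (MonoidHom.mk' Φ hΦ_mul) ⟨hΦ_inj, hΦ_surj⟩, hΦ⟩

theorem diffeomorphism_induces_group_isomorphism_general
    (n : ℕ) (G H : Subgroup (GL (Fin n) ℝ)) [Finite G] [Finite H]
    (f finv : (Fin n → ℝ) → (Fin n → ℝ))
    (hf : ContDiff ℝ 1 f) (hfinv : ContDiff ℝ 1 finv)
    (hleft : Function.LeftInverse finv f) (hright : Function.RightInverse finv f)
    (h1 : ∀ γ ∈ G, ∀ x : Fin n → ℝ, ∃ μ ∈ H,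
      f (Matrix.mulVec ((γ : GL (Fin n) ℝ) : Matrix (Fin n) (Fin n) ℝ) x) =
        Matrix.mulVec ((μ : GL (Fin n) ℝ) : Matrix (Fin n) (Fin n) ℝ) (f x))
    (h2 : ∀ μ ∈ H, ∀ y : Fin n → ℝ, ∃ γ ∈ G,
      finv (Matrix.mulVec ((μ : GL (Fin n) ℝ) : Matrix (Fin n) (Fin n) ℝ) y) =
        Matrix.mulVec ((γ : GL (Fin n) ℝ) : Matrix (Fin n) (Fin n) ℝ) (finv y)) :
    ∃ Θ : G ≃* H, ∀ (γ : G) (x : Fin n → ℝ),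
      f (Matrix.mulVec (((γ : GL (Fin n) ℝ)) : Matrix (Fin n) (Fin n) ℝ) x) =
        Matrix.mulVec (((Θ γ : GL (Fin n) ℝ)) : Matrix (Fin n) (Fin n) ℝ) (f x) := by
  let e : (Fin n → ℝ) ≃ (Fin n → ℝ) := ⟨f, finv, hleft, hright⟩
  -- Subgroups of `GL` act on vectors through `Matrix.smul_eq_mulVec`, definitionally.
  have hsmul : ∀ (K : Subgroup (GL (Fin n) ℝ)) (k : K), ContDiff ℝ 1 (k • · : (Fin n → ℝ) → _) :=
    fun K k => (LinearMap.toContinuousLinearMap (DistribSMul.toLinearMap ℝ _ k)).contDiff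
  refine e.exists_mulEquiv_of_forall_exists_smul
    (fun γ => e.exists_forall_apply_eq_smul_of_forall_exists hf hfinv (hsmul G γ) fun x => ?_)
    (fun μ => e.symm.exists_forall_apply_eq_smul_of_forall_exists hfinv hf (hsmul H μ) fun y => ?_)
  · obtain ⟨μ, hμ, hfx⟩ := h1 γ γ.2 x
    exact ⟨⟨μ, hμ⟩, hfx⟩
  · obtain ⟨γ, hγ, hfy⟩ := h2 μ μ.2 y
    exact ⟨⟨γ, hγ⟩, hfy⟩

/-- A C¹ diffeomorphism of ℝⁿ intertwining the actions of two finite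
linear groups G and H (in the pointwise sense (i) and (ii)) is Θ-equivariant for a
group isomorphism Θ : G → H. -/
theorem diffeomorphism_induces_group_isomorphism
    (n : ℕ) (hn : 1 ≤ n) (G H : Subgroup (GL (Fin n) ℝ)) [Finite G] [Finite H]
    (f finv : (Fin n → ℝ) → (Fin n → ℝ))
    (hf : ContDiff ℝ 1 f) (hfinv : ContDiff ℝ 1 finv)
    (hleft : Function.LeftInverse finv f) (hright : Function.RightInverse finv f)
    (h1 : ∀ γ ∈ G, ∀ x : Fin n → ℝ, ∃ μ ∈ H,
      f (Matrix.mulVec ((γ : GL (Fin n) ℝ) : Matrix (Fin n) (Fin n) ℝ) x) =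
        Matrix.mulVec ((μ : GL (Fin n) ℝ) : Matrix (Fin n) (Fin n) ℝ) (f x))
    (h2 : ∀ μ ∈ H, ∀ y : Fin n → ℝ, ∃ γ ∈ G,
      finv (Matrix.mulVec ((μ : GL (Fin n) ℝ) : Matrix (Fin n) (Fin n) ℝ) y) =
        Matrix.mulVec ((γ : GL (Fin n) ℝ) : Matrix (Fin n) (Fin n) ℝ) (finv y)) :
    ∃ Θ : G ≃* H, ∀ (γ : G) (x : Fin n → ℝ),
      f (Matrix.mulVec (((γ : GL (Fin n) ℝ)) : Matrix (Fin n) (Fin n) ℝ) x) =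
        Matrix.mulVec (((Θ γ : GL (Fin n) ℝ)) : Matrix (Fin n) (Fin n) ℝ) (f x) :=
  diffeomorphism_induces_group_isomorphism_general n G H f finv hf hfinv hleft hright h1 h2
end

section
/- Let n ≥ 1, let G and H be finite subgroups of GL(n, ℝ) acting on ℝⁿ by matrix–vector multiplication, and let Θ : G → H be a group isomorphism. Let f : ℝⁿ → ℝⁿ be a bijection such that f and f⁻¹ are continuously differentiable, with f(0) = 0 and f(γ·x) = Θ(γ)·f(x) for all γ ∈ G and x ∈ ℝⁿ. Let V_G = {v ∈ ℝⁿ : γ·v = v for all γ ∈ G} and V_H = {v ∈ ℝⁿ : μ·v = v for all μ ∈ H} be the fixed subspaces. Then the differential Df(0) maps V_G into V_H, and dim V_G = dim V_H. -/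
/-!
Differentiating `f ∘ γ = Θ γ ∘ f` at the common fixed point `0` shows that `Df(0)` intertwines
`γ` with `Θ γ`, so it sends `G`-fixed vectors to `H`-fixed vectors. The same argument applies to
`f⁻¹`, which is `Θ⁻¹`-equivariant, and `Df⁻¹(0)` inverts `Df(0)`; hence `Df(0)` restricts to a
linear isomorphism `V_G ≃ V_H`.
-/

/-- The subspace of vectors of ℝⁿ fixed by every element of a subgroup `G` of GL(n,ℝ)
acting by matrix–vector multiplication. -/
noncomputable def fixedSubspace (n : ℕ) (G : Subgroup (GL (Fin n) ℝ)) :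
    Submodule ℝ (Fin n → ℝ) :=
  ⨅ γ : G, LinearMap.eqLocus
    (Matrix.mulVecLin (((γ : GL (Fin n) ℝ)) : Matrix (Fin n) (Fin n) ℝ)) LinearMap.id

open Function Matrix

section Calculus

variable {𝕜 E F : Type*} [NontriviallyNormedField 𝕜]
  [NormedAddCommGroup E] [NormedSpace 𝕜 E] [NormedAddCommGroup F] [NormedSpace 𝕜 F]

theorem fderiv_comp_eq_comp_fderiv_of_semiconj {f : E → F} {A : E →L[𝕜] E} {B : F →L[𝕜] F}
    {x : E} (hf : DifferentiableAt 𝕜 f x) (hx : A x = x) (h : Semiconj f A B) :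
    (fderiv 𝕜 f x).comp A = B.comp (fderiv 𝕜 f x) := by
  have hfA : DifferentiableAt 𝕜 f (A x) := by rwa [hx]
  have := congrArg (fderiv 𝕜 · x) h.comp_eq
  simpa only [fderiv_comp x hfA A.differentiableAt, fderiv_comp x B.differentiableAt hf,
    ContinuousLinearMap.fderiv, hx] using this

theorem Function.LeftInverse.fderiv {f : E → F} {g : F → E} {x : E} {y : F}
    (h : LeftInverse g f) (hxy : f x = y) (hg : DifferentiableAt 𝕜 g y)
    (hf : DifferentiableAt 𝕜 f x) : LeftInverse (fderiv 𝕜 g y) (fderiv 𝕜 f x) := by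
  subst hxy
  intro v
  rw [← ContinuousLinearMap.comp_apply, ← fderiv_comp x hg hf, h.comp_eq_id, fderiv_id]
  rfl

end Calculus

theorem Submodule.map_equiv_eq_of_mapsTo {R M N : Type*} [Semiring R] [AddCommMonoid M]
    [AddCommMonoid N] [Module R M] [Module R N] (e : M ≃ₗ[R] N) {p : Submodule R M}
    {q : Submodule R N} (hp : ∀ v ∈ p, e v ∈ q) (hq : ∀ w ∈ q, e.symm w ∈ p) :
    p.map (e : M →ₗ[R] N) = q :=
  le_antisymm (Submodule.map_le_iff_le_comap.2 hp)
    fun w hw => ⟨e.symm w, hq w hw, e.apply_symm_apply w⟩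

theorem mem_fixedSubspace_iff {n : ℕ} {G : Subgroup (GL (Fin n) ℝ)} {v : Fin n → ℝ} :
    v ∈ fixedSubspace n G ↔
      ∀ γ : G, ((γ : GL (Fin n) ℝ) : Matrix (Fin n) (Fin n) ℝ) *ᵥ v = v := by
  simp [fixedSubspace, Submodule.mem_iInf, LinearMap.mem_eqLocus]

theorem fderiv_mem_fixedSubspace {n : ℕ} {G H : Subgroup (GL (Fin n) ℝ)} {Θ : G → H}
    (hΘ : Surjective Θ) {f : (Fin n → ℝ) → (Fin n → ℝ)} (hf : DifferentiableAt ℝ f 0)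
    (hequiv : ∀ (γ : G) (x : Fin n → ℝ),
      f (((γ : GL (Fin n) ℝ) : Matrix (Fin n) (Fin n) ℝ) *ᵥ x) =
        ((Θ γ : GL (Fin n) ℝ) : Matrix (Fin n) (Fin n) ℝ) *ᵥ f x) :
    ∀ v ∈ fixedSubspace n G, fderiv ℝ f 0 v ∈ fixedSubspace n H := by
  intro v hv
  rw [mem_fixedSubspace_iff] at hv ⊢
  intro μ
  obtain ⟨γ, rfl⟩ := hΘ μ
  have hcomm := fderiv_comp_eq_comp_fderiv_of_semiconj
    (A := (Matrix.mulVecLin ((γ : GL (Fin n) ℝ) : Matrix (Fin n) (Fin n) ℝ)).toContinuousLinearMap)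
    (B := (Matrix.mulVecLin ((Θ γ : GL (Fin n) ℝ) : Matrix (Fin n) (Fin n) ℝ)).toContinuousLinearMap)
    hf (map_zero _) (hequiv γ)
  have := congrArg (· v) hcomm
  simp only [ContinuousLinearMap.comp_apply, LinearMap.coe_toContinuousLinearMap',
    Matrix.mulVecLin_apply, hv γ] at this
  exact this.symm

theorem equivariant_diffeo_preserves_fixed_subspace_general
    (n : ℕ) (G H : Subgroup (GL (Fin n) ℝ))
    (Θ : G ≃* H) (f finv : (Fin n → ℝ) → (Fin n → ℝ))
    (hf : ContDiff ℝ 1 f) (hfinv : ContDiff ℝ 1 finv)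
    (hleft : Function.LeftInverse finv f) (hright : Function.RightInverse finv f)
    (hf0 : f 0 = 0)
    (hequiv : ∀ (γ : G) (x : Fin n → ℝ),
      f (Matrix.mulVec (((γ : GL (Fin n) ℝ)) : Matrix (Fin n) (Fin n) ℝ) x) =
        Matrix.mulVec (((Θ γ : GL (Fin n) ℝ)) : Matrix (Fin n) (Fin n) ℝ) (f x)) :
    (∀ v ∈ fixedSubspace n G, fderiv ℝ f 0 v ∈ fixedSubspace n H) ∧
    Module.finrank ℝ (fixedSubspace n G) = Module.finrank ℝ (fixedSubspace n H) := by
  have hfinv0 : finv 0 = 0 := by simpa [hf0] using hleft 0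
  have hDf : DifferentiableAt ℝ f 0 := (hf.differentiable one_ne_zero).differentiableAt
  have hDfinv : DifferentiableAt ℝ finv 0 := (hfinv.differentiable one_ne_zero).differentiableAt
  have hequiv_inv : ∀ (μ : H) (y : Fin n → ℝ),
      finv (((μ : GL (Fin n) ℝ) : Matrix (Fin n) (Fin n) ℝ) *ᵥ y) =
        ((Θ.symm μ : GL (Fin n) ℝ) : Matrix (Fin n) (Fin n) ℝ) *ᵥ finv y := fun μ y => by
    simpa using (Semiconj.inverse_left (hequiv (Θ.symm μ)) hleft hright) y
  have hmapsG := fderiv_mem_fixedSubspace Θ.surjective hDf hequiv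
  have hmapsH := fderiv_mem_fixedSubspace Θ.symm.surjective hDfinv hequiv_inv
  let D : (Fin n → ℝ) ≃L[ℝ] (Fin n → ℝ) :=
    .equivOfInverse (fderiv ℝ f 0) (fderiv ℝ finv 0) (hleft.fderiv hf0 hDfinv hDf)
      (hright.fderiv hfinv0 hDf hDfinv)
  refine ⟨hmapsG, ?_⟩
  rw [← Submodule.map_equiv_eq_of_mapsTo D.toLinearEquiv hmapsG hmapsH,
    LinearEquiv.finrank_map_eq]

/-- A Θ-equivariant C¹ diffeomorphism of ℝⁿ fixing the origin maps the
fixed subspace V_G of G into the fixed subspace V_H of H via its differential at 0,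
and dim V_G = dim V_H. -/
theorem equivariant_diffeo_preserves_fixed_subspace
    (n : ℕ) (hn : 1 ≤ n) (G H : Subgroup (GL (Fin n) ℝ)) [Finite G] [Finite H]
    (Θ : G ≃* H) (f finv : (Fin n → ℝ) → (Fin n → ℝ))
    (hf : ContDiff ℝ 1 f) (hfinv : ContDiff ℝ 1 finv)
    (hleft : Function.LeftInverse finv f) (hright : Function.RightInverse finv f)
    (hf0 : f 0 = 0)
    (hequiv : ∀ (γ : G) (x : Fin n → ℝ),
      f (Matrix.mulVec (((γ : GL (Fin n) ℝ)) : Matrix (Fin n) (Fin n) ℝ) x) =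
        Matrix.mulVec (((Θ γ : GL (Fin n) ℝ)) : Matrix (Fin n) (Fin n) ℝ) (f x)) :
    (∀ v ∈ fixedSubspace n G, fderiv ℝ f 0 v ∈ fixedSubspace n H) ∧
    Module.finrank ℝ (fixedSubspace n G) = Module.finrank ℝ (fixedSubspace n H) :=
  equivariant_diffeo_preserves_fixed_subspace_general n G H Θ f finv hf hfinv hleft hright hf0
    hequiv
end

section
/- Let d ≥ 2 and n ≥ 1. Then the configuration space of n distinct ordered points in ℝᵈ, namely the set {x : Fin n → ℝᵈ | x is injective} (equivalently, the complement of the fat diagonal Δ = {x : x_i = x_j for some i ≠ j} in (ℝᵈ)ⁿ), is path-connected. -/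
open Function

private lemma config_step {E : Type*} [NormedAddCommGroup E] [NormedSpace ℝ E]
    (h1 : 1 < Module.rank ℝ E) {n : ℕ} {u : Fin n → E} (hu : Function.Injective u)
    (k : Fin n) {b : E} (hb : ∀ i, i ≠ k → b ≠ u i) :
    JoinedIn {x : Fin n → E | Function.Injective x} u (Function.update u k b) := by
  classical
  set F : Set E := u '' {i | i ≠ k} with hF
  have hFc : F.Countable := (Set.toFinite _).countable
  have hpc := hFc.isPathConnected_compl_of_one_lt_rank h1
  have hmem : ∀ c : E, (∀ i, i ≠ k → c ≠ u i) → c ∈ Fᶜ := by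
    rintro c hc ⟨i, hi, rfl⟩
    exact hc i hi rfl
  have huk : u k ∈ Fᶜ := hmem _ fun i hi h => hi (hu h.symm)
  have hbk : b ∈ Fᶜ := hmem _ hb
  obtain ⟨γ, hγ⟩ := hpc.joinedIn (u k) huk b hbk
  have hcont : Continuous fun t : unitInterval => Function.update u k (γ t) :=
    continuous_const.update k γ.continuous
  refine ⟨⟨⟨fun t => Function.update u k (γ t), hcont⟩, by simp, by simp⟩, ?_⟩
  intro t
  have hγt : ∀ i, i ≠ k → γ t ≠ u i := fun i hi h => (hγ t) ⟨i, hi, h.symm⟩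
  intro i j hij0
  have hij : Function.update u k (γ t) i = Function.update u k (γ t) j := hij0
  by_cases hik : i = k <;> by_cases hjk : j = k
  · rw [hik, hjk]
  · exfalso
    rw [hik, Function.update_self, Function.update_of_ne hjk] at hij
    exact hγt j hjk hij
  · exfalso
    rw [hjk, Function.update_self, Function.update_of_ne hik] at hij
    exact hγt i hik hij.symm
  · rw [Function.update_of_ne hik, Function.update_of_ne hjk] at hij
    exact hu hij

private lemma config_chain {E : Type*} [NormedAddCommGroup E] [NormedSpace ℝ E]
    (h1 : 1 < Module.rank ℝ E) {n : ℕ} {x w : Fin n → E} (hx : Function.Injective x)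
    (hw : Function.Injective w) (hxw : ∀ i j, w i ≠ x j) :
    JoinedIn {x : Fin n → E | Function.Injective x} x w := by
  classical
  set u : ℕ → Fin n → E := fun k i => if (i : ℕ) < k then w i else x i with hu
  have hinj : ∀ k, Function.Injective (u k) := by
    intro k i j hij
    simp only [hu] at hij
    by_cases hi : (i : ℕ) < k <;> by_cases hj : (j : ℕ) < k <;> simp [hi, hj] at hij
    · exact hw hij
    · exact absurd hij (hxw i j)
    · exact absurd hij.symm (hxw j i)
    · exact hx hij
  have key : ∀ k, k ≤ n → JoinedIn {x : Fin n → E | Function.Injective x} x (u k) := by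
    intro k hk
    induction k with
    | zero =>
        have : u 0 = x := by funext i; simp [hu]
        rw [this]; exact JoinedIn.refl hx
    | succ m ih =>
        have hm : m < n := hk
        have step : u (m + 1) = Function.update (u m) ⟨m, hm⟩ (w ⟨m, hm⟩) := by
          funext i
          rcases eq_or_ne i ⟨m, hm⟩ with rfl | hi
          · simp [hu]
          · have hvi : (i : ℕ) ≠ m := fun h => hi (Fin.ext h)
            rw [Function.update_of_ne hi]
            simp only [hu]
            rcases lt_or_ge (i : ℕ) m with h | h
            · simp [h, Nat.lt_succ_of_lt h]
            · have h1 : ¬ (i : ℕ) < m := not_lt.mpr h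
              have h2 : ¬ (i : ℕ) < m + 1 := by omega
              simp [h1, h2]
        have hb : ∀ i, i ≠ (⟨m, hm⟩ : Fin n) → w ⟨m, hm⟩ ≠ u m i := by
          intro i hi
          simp only [hu]
          rcases lt_or_ge (i : ℕ) m with h | h
          · simp only [h, if_pos]
            exact fun he => hi (hw he).symm
          · have h1 : ¬ (i : ℕ) < m := not_lt.mpr h
            simp only [h1, if_neg, if_false]
            exact hxw _ _
        rw [step]
        exact (ih (le_of_lt hm)).trans (config_step h1 (hinj m) ⟨m, hm⟩ hb)
  have : u n = w := by funext i; simp [hu, i.isLt]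
  rw [← this]
  exact key n le_rfl

/-- For d ≥ 2, the ordered configuration space of n distinct points in ℝᵈ
(the complement of the fat diagonal in (ℝᵈ)ⁿ) is path-connected. -/
theorem configuration_space_pathConnected
    (d n : ℕ) (hd : 2 ≤ d) (hn : 1 ≤ n) :
    IsPathConnected {x : Fin n → (Fin d → ℝ) | Function.Injective x} := by
  classical
  have hd0 : 0 < d := by omega
  have h1 : 1 < Module.rank ℝ (Fin d → ℝ) := by
    rw [rank_fin_fun]
    exact_mod_cast hd
  -- the "diagonal" injection of ℝ
  set ι : ℝ → (Fin d → ℝ) := fun c _ => c with hι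
  have hι_inj : Function.Injective ι := by
    intro a b h
    exact congrFun h ⟨0, hd0⟩
  -- base point
  set x₀ : Fin n → (Fin d → ℝ) := fun i => ι (i : ℕ) with hx₀
  have hx₀_inj : Function.Injective x₀ := fun i j h =>
    Fin.ext (Nat.cast_injective (hι_inj h))
  refine ⟨x₀, hx₀_inj, ?_⟩
  intro y hy
  -- choose intermediate configuration avoiding x₀ and y
  have hbad : (ι ⁻¹' (Set.range x₀ ∪ Set.range y)).Finite :=
    Set.Finite.preimage hι_inj.injOn ((Set.finite_range x₀).union (Set.finite_range y))
  have hinf : (ι ⁻¹' (Set.range x₀ ∪ Set.range y))ᶜ.Infinite :=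
    Set.Finite.infinite_compl hbad
  set f := hinf.natEmbedding with hf
  set w : Fin n → (Fin d → ℝ) := fun i => ι (f (i : ℕ) : ℝ) with hw
  have hw_inj : Function.Injective w := by
    intro i j h
    exact Fin.ext (f.injective (Subtype.ext (hι_inj h)))
  have hw_avoid : ∀ i, w i ∉ Set.range x₀ ∪ Set.range y := by
    intro i hmem
    exact (f (i : ℕ)).2 hmem
  have h₁ : JoinedIn {x : Fin n → (Fin d → ℝ) | Function.Injective x} x₀ w :=
    config_chain h1 hx₀_inj hw_inj fun i j h =>
      hw_avoid i (Or.inl ⟨j, h.symm⟩)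
  have h₂ : JoinedIn {x : Fin n → (Fin d → ℝ) | Function.Injective x} y w :=
    config_chain h1 hy hw_inj fun i j h =>
      hw_avoid i (Or.inr ⟨j, h.symm⟩)
  exact h₁.trans h₂.symm
end

section
/- Let M be a connected Hausdorff topological manifold of dimension d ≥ 2 (a connected Hausdorff topological space locally homeomorphic to ℝᵈ). Then for every n ≥ 1 the set {x : Fin n → M | x is injective}, viewed as a subspace of the product Mⁿ, is connected. -/
/-!
A chart identifies a neighbourhood of any point of `M` with a ball in `ℝᵈ`, and a ball minus a
countable set is connected when `d ≥ 2`. So the complement `D` of a countable set is dense and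
every point has a neighbourhood meeting `D` in a connected set; the points near which `D` lies in
a fixed component of `D` then form a clopen subset of the connected space `M`, hence `D` is
connected. In the configuration space one coordinate can therefore move freely in the complement
of the other coordinates. Replacing coordinates one at a time joins a configuration to any
configuration disjoint from it, and two configurations are joined through a third one disjoint
from both.
-/

open Set Filter Topology Function Metric

theorem Dense.isConnected_of_forall_exists_nhds_isPreconnected_inter {X : Type*}
    [TopologicalSpace X] [ConnectedSpace X] {D : Set X} (hD : Dense D)
    (hloc : ∀ p, ∃ W ∈ 𝓝 p, IsPreconnected (W ∩ D)) : IsConnected D := by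
  obtain ⟨x, hx⟩ := hD.nonempty
  let C := connectedComponentIn D x
  let U := {p | ∀ᶠ q in 𝓝 p, q ∈ D → q ∈ C}
  let V := {p | ∀ᶠ q in 𝓝 p, q ∈ D → q ∉ C}
  have hUV : univ ⊆ U ∪ V := by
    intro p _
    obtain ⟨W, hW, hWD⟩ := hloc p
    by_cases h : (W ∩ D ∩ C).Nonempty
    · obtain ⟨y, hy, hyC⟩ := h
      have hWC : W ∩ D ⊆ connectedComponentIn D x := by
        rw [connectedComponentIn_eq hyC]
        exact hWD.subset_connectedComponentIn hy inter_subset_right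
      exact .inl (mem_of_superset hW fun q hqW hqD => hWC ⟨hqW, hqD⟩)
    · exact .inr (mem_of_superset hW fun q hqW hqD hqC => h ⟨q, ⟨hqW, hqD⟩, hqC⟩)
  have hUV_disj : Disjoint U V := by
    refine disjoint_left.2 fun p hpU hpV => ?_
    obtain ⟨q, hqD, hqU, hqV⟩ :=
      ((mem_closure_iff_frequently.1 (hD p)).and_eventually (hpU.and hpV)).exists
    exact hqV hqD (hqU hqD)
  have hxU : x ∈ U := (hUV trivial).resolve_right fun hxV =>
    hxV.self_of_nhds hx (mem_connectedComponentIn hx)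
  have hU : univ ⊆ U := isPreconnected_univ.subset_left_of_subset_union
    isOpen_setOfPred_eventually_nhds isOpen_setOfPred_eventually_nhds hUV_disj hUV
    ⟨x, trivial, hxU⟩
  have hDC : D = C := subset_antisymm (fun y hy => (hU trivial).self_of_nhds hy)
    (connectedComponentIn_subset D x)
  exact hDC ▸ isConnected_connectedComponentIn_iff.2 hx

section

variable {E : Type*} [NormedAddCommGroup E] [NormedSpace ℝ E]

theorem Metric.isConnected_ball_sdiff_of_countable (hE : 1 < Module.rank ℝ E) (c : E) {r : ℝ}
    (hr : 0 < r) {T : Set E} (hT : T.Countable) : IsConnected (ball c r \ T) := by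
  let f := OpenPartialHomeomorph.univBall c r
  have hf_inj : Injective f :=
    injOn_univ.1 (OpenPartialHomeomorph.univBall_source c r ▸ f.injOn)
  have hf_range : range f = ball c r := by
    rw [← image_univ, ← OpenPartialHomeomorph.univBall_source c r, f.image_source_eq_target,
      OpenPartialHomeomorph.univBall_target c hr]
  rw [← hf_range, ← image_compl_preimage]
  exact ((hT.preimage hf_inj).isConnected_compl_of_one_lt_rank hE).image f
    (f.continuousOn.mono (by simp [f]))

theorem exists_nhds_subset_isConnected_sdiff_of_countable (hE : 1 < Module.rank ℝ E)
    {M : Type*} [TopologicalSpace M] [ChartedSpace E M] {S : Set M} (hS : S.Countable)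
    {p : M} {O : Set M} (hO : O ∈ 𝓝 p) : ∃ W ∈ 𝓝 p, W ⊆ O ∧ IsConnected (W \ S) := by
  let e := chartAt E p
  have hp : p ∈ e.source := mem_chart_source E p
  have hep : e p ∈ e.target := e.map_source hp
  have hO' : e.target ∩ e.symm ⁻¹' O ∈ 𝓝 (e p) :=
    inter_mem (e.open_target.mem_nhds hep) (e.continuousAt_symm hep (by rwa [e.left_inv hp]))
  obtain ⟨r, hr, hB⟩ := Metric.mem_nhds_iff.1 hO'
  have hB_target : ball (e p) r ⊆ e.target := hB.trans inter_subset_left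
  refine ⟨e.symm '' ball (e p) r, ?_, image_subset_iff.2 (hB.trans inter_subset_right), ?_⟩
  · simpa [e.left_inv hp] using e.symm.image_mem_nhds hep (ball_mem_nhds _ hr)
  · have hT : (e.symm ⁻¹' S ∩ ball (e p) r).Countable := by
      refine (hS.image e).mono fun y hy => ?_
      exact ⟨e.symm y, hy.1, e.right_inv (hB_target hy.2)⟩
    rw [← image_sdiff_preimage, ← sdiff_inter_self_eq_sdiff]
    exact (isConnected_ball_sdiff_of_countable hE _ hr hT).image _
      (e.continuousOn_symm.mono (sdiff_subset.trans hB_target))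

end

theorem Set.Countable.isConnected_compl_of_chartedSpace {E : Type*} [NormedAddCommGroup E]
    [NormedSpace ℝ E] (hE : 1 < Module.rank ℝ E) {M : Type*} [TopologicalSpace M]
    [ConnectedSpace M] [ChartedSpace E M] {S : Set M} (hS : S.Countable) : IsConnected Sᶜ := by
  have hdense : Dense Sᶜ := fun p => mem_closure_iff_nhds.2 fun O hO => by
    obtain ⟨W, -, hWO, hW⟩ := exists_nhds_subset_isConnected_sdiff_of_countable hE hS hO
    obtain ⟨y, hyW, hyS⟩ := hW.nonempty
    exact ⟨y, hWO hyW, hyS⟩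
  refine hdense.isConnected_of_forall_exists_nhds_isPreconnected_inter fun p => ?_
  obtain ⟨W, hW, -, hWS⟩ :=
    exists_nhds_subset_isConnected_sdiff_of_countable hE hS (univ_mem (f := 𝓝 p))
  exact ⟨W, hW, hWS.isPreconnected⟩

def configurationSpace (ι M : Type*) : Set (ι → M) := {x | Injective x}

section

variable {ι M : Type*} [Finite ι]

theorem exists_mem_configurationSpace_forall_notMem [Infinite M] {S : Set M} (hS : S.Finite) :
    ∃ z ∈ configurationSpace ι M, ∀ i, z i ∉ S := by
  have : Infinite ↥Sᶜ := hS.infinite_compl.to_subtype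
  let z : ι ↪ ↥Sᶜ :=
    (Finite.equivFin ι).toEmbedding.trans (Fin.valEmbedding.trans (Infinite.natEmbedding _))
  exact ⟨fun i => z i, Subtype.val_injective.comp z.injective, fun i => (z i).2⟩

variable [TopologicalSpace M]

theorem update_mem_connectedComponentIn_configurationSpace [DecidableEq ι]
    (hM : ∀ S : Set M, S.Finite → IsPreconnected Sᶜ) {w : ι → M}
    (hw : w ∈ configurationSpace ι M) (i : ι) {b : M} (hb : ∀ j ≠ i, w j ≠ b) :
    update w i b ∈ connectedComponentIn (configurationSpace ι M) w := by
  let S := w '' {i}ᶜ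
  have hS : S.Finite := (toFinite _).image w
  have hmaps : MapsTo (update w i) Sᶜ (configurationSpace ι M) := by
    intro m hm j k hjk
    have hw' : Injective w := hw
    grind [update_of_ne, update_self]
  have hK : IsPreconnected (update w i '' Sᶜ) :=
    (hM S hS).image _ (by fun_prop : Continuous (update w i)).continuousOn
  refine hK.subset_connectedComponentIn ⟨w i, ?_, update_eq_self i w⟩ hmaps.image_subset
    ⟨b, ?_, rfl⟩
  · rintro ⟨j, hj, hji⟩
    exact hj (hw hji)
  · rintro ⟨j, hj, hjb⟩
    exact hb j hj hjb

theorem mem_connectedComponentIn_configurationSpace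
    (hM : ∀ S : Set M, S.Finite → IsPreconnected Sᶜ) {x z : ι → M}
    (hx : x ∈ configurationSpace ι M) (hz : z ∈ configurationSpace ι M)
    (hxz : ∀ i j, x i ≠ z j) :
    z ∈ connectedComponentIn (configurationSpace ι M) x := by
  classical
  have := Fintype.ofFinite ι
  suffices ∀ s : Finset ι, s.piecewise z x ∈ connectedComponentIn (configurationSpace ι M) x by
    simpa using this Finset.univ
  intro s
  induction s using Finset.induction_on with
  | empty => simpa using mem_connectedComponentIn hx
  | insert i s hi ih =>
    have hw : s.piecewise z x ∈ configurationSpace ι M := by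
      rw [configurationSpace, mem_ofPred_eq, ← Finset.piecewise_coe, injective_piecewise_iff]
      exact ⟨hz.injOn, hx.injOn, fun a _ b _ => (hxz b a).symm⟩
    rw [Finset.piecewise_insert, connectedComponentIn_eq ih]
    refine update_mem_connectedComponentIn_configurationSpace hM hw i fun j hji => ?_
    by_cases hj : j ∈ s
    · simpa [hj] using hz.ne hji
    · simpa [hj] using hxz j i

theorem isConnected_configurationSpace [Infinite M]
    (hM : ∀ S : Set M, S.Finite → IsPreconnected Sᶜ) : IsConnected (configurationSpace ι M) := by
  obtain ⟨z₀, hz₀, -⟩ :=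
    exists_mem_configurationSpace_forall_notMem (ι := ι) (finite_empty (α := M))
  refine ⟨⟨z₀, hz₀⟩, isPreconnected_of_forall_pair fun x hx y hy => ?_⟩
  obtain ⟨z, hz, hz_avoid⟩ :=
    exists_mem_configurationSpace_forall_notMem (ι := ι) ((finite_range x).union (finite_range y))
  have hxz := mem_connectedComponentIn_configurationSpace hM hx hz
    fun i j h => hz_avoid j (.inl ⟨i, h⟩)
  have hyz := mem_connectedComponentIn_configurationSpace hM hy hz
    fun i j h => hz_avoid j (.inr ⟨i, h⟩)
  refine ⟨_, connectedComponentIn_subset _ x, mem_connectedComponentIn hx, ?_,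
    isPreconnected_connectedComponentIn⟩
  rw [connectedComponentIn_eq hxz, ← connectedComponentIn_eq hyz]
  exact mem_connectedComponentIn hy

end

theorem configuration_space_of_manifold_connected_general
    (d : ℕ) (hd : 2 ≤ d) (M : Type*) [TopologicalSpace M] [ConnectedSpace M]
    [ChartedSpace (EuclideanSpace ℝ (Fin d)) M] (n : ℕ) :
    IsConnected {x : Fin n → M | Function.Injective x} := by
  have hrank : 1 < Module.rank ℝ (EuclideanSpace ℝ (Fin d)) := by
    rw [← Module.finrank_eq_rank, finrank_euclideanSpace_fin]
    exact_mod_cast hd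
  have hcompl (S : Set M) (hS : S.Countable) : IsConnected Sᶜ :=
    hS.isConnected_compl_of_chartedSpace hrank
  have : Infinite M := infinite_univ_iff.1 fun h =>
    (hcompl univ h.countable).nonempty.ne_empty compl_univ
  exact isConnected_configurationSpace fun S hS => (hcompl S hS.countable).isPreconnected

/-- For a connected Hausdorff topological manifold M of dimension d ≥ 2
(every point has a chart to ℝᵈ), the ordered configuration space of n distinct points,
as a subspace of Mⁿ, is connected. -/
theorem configuration_space_of_manifold_connected
    (d : ℕ) (hd : 2 ≤ d) (M : Type*) [TopologicalSpace M] [T2Space M] [ConnectedSpace M]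
    [ChartedSpace (EuclideanSpace ℝ (Fin d)) M] (n : ℕ) (hn : 1 ≤ n) :
    IsConnected {x : Fin n → M | Function.Injective x} :=
  configuration_space_of_manifold_connected_general d hd M n
end

section
/- Let n ≥ 1 and let G and H be finite subgroups of GL(n, ℝ) acting on ℝⁿ by matrix–vector multiplication. Let f, g : ℝⁿ → ℝⁿ be continuously differentiable maps such that for every x ∈ ℝⁿ there exists γ ∈ G with g(f(x)) = γ·x, and for every y ∈ ℝⁿ there exists μ ∈ H with f(g(y)) = μ·y. Then the differential Df(x) is invertible for every x ∈ ℝⁿ and the differential Dg(y) is invertible for every y ∈ ℝⁿ; i.e., f and g are local diffeomorphisms. -/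
/-!
On any open set where `g ∘ f` agrees with the linear map `γ`, its derivative is `γ`. By Baire, the
finitely many closed sets `{x | g (f x) = γ x}` have interiors with dense union, and since the
derivative is continuous and takes values in a finite set there, it equals some `γ ∈ G` everywhere.
Hence `D(g ∘ f) x = Dg (f x) ∘ Df x` is invertible, so `Df x` is injective, hence bijective in finite
dimension; symmetrically for `g`.
-/

open Set Topology

theorem exists_fderiv_eq_of_forall_exists_apply_eq {𝕜 ι E F : Type*} [NontriviallyNormedField 𝕜]
    [Finite ι] [NormedAddCommGroup E] [NormedSpace 𝕜 E] [BaireSpace E]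
    [NormedAddCommGroup F] [NormedSpace 𝕜 F] (A : ι → E →L[𝕜] F) {h : E → F}
    (hh : ContDiff 𝕜 1 h) (hA : ∀ x, ∃ i, h x = A i x) (x : E) : ∃ i, fderiv 𝕜 h x = A i := by
  have hclosed : IsClosed {x | ∃ i, fderiv 𝕜 h x = A i} := by
    simp only [ofPred_exists]
    exact isClosed_iUnion_of_finite fun i =>
      isClosed_eq (hh.continuous_fderiv one_ne_zero) continuous_const
  have hdense : Dense (⋃ i, interior {x | h x = A i x}) :=
    dense_iUnion_interior_of_closed (fun i => isClosed_eq hh.continuous (A i).continuous)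
      (eq_univ_of_forall fun x => mem_iUnion.mpr (hA x))
  have hsub : (⋃ i, interior {x | h x = A i x}) ⊆ {x | ∃ i, fderiv 𝕜 h x = A i} := by
    simp only [iUnion_subset_iff]
    intro i y hy
    have heq : h =ᶠ[𝓝 y] A i := mem_interior_iff_mem_nhds.mp hy
    exact ⟨i, by rw [heq.fderiv_eq, (A i).fderiv]⟩
  exact hclosed.closure_subset_iff.mpr hsub (hdense x)

theorem injective_fderiv_of_forall_exists_mulVec_eq {n : ℕ} (G : Subgroup (GL (Fin n) ℝ))
    [Finite G] {h : (Fin n → ℝ) → (Fin n → ℝ)} (hh : ContDiff ℝ 1 h)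
    (hG : ∀ x, ∃ γ ∈ G, h x = Matrix.mulVec ((γ : GL (Fin n) ℝ) : Matrix (Fin n) (Fin n) ℝ) x)
    (x : Fin n → ℝ) : Function.Injective (fderiv ℝ h x) := by
  let A : G → (Fin n → ℝ) →L[ℝ] (Fin n → ℝ) := fun γ =>
    LinearMap.toContinuousLinearMap (Matrix.toLin' ((γ : GL (Fin n) ℝ) : Matrix (Fin n) (Fin n) ℝ))
  obtain ⟨γ, hγ⟩ := exists_fderiv_eq_of_forall_exists_apply_eq A hh
    (fun x => let ⟨γ, hγG, hγ⟩ := hG x; ⟨⟨γ, hγG⟩, hγ⟩) x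
  rw [hγ]
  exact Matrix.mulVec_injective_iff_isUnit.mpr (Units.isUnit _)

theorem bijective_fderiv_of_injective_fderiv_comp {E : Type*} [NormedAddCommGroup E]
    [NormedSpace ℝ E] [FiniteDimensional ℝ E] {f g : E → E} {x : E}
    (hf : DifferentiableAt ℝ f x) (hg : DifferentiableAt ℝ g (f x))
    (hgf : Function.Injective (fderiv ℝ (g ∘ f) x)) : Function.Bijective (fderiv ℝ f x) := by
  rw [fderiv_comp x hg hf, ContinuousLinearMap.coe_comp] at hgf
  have hinj : Function.Injective (fderiv ℝ f x) := hgf.of_comp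
  exact ⟨hinj, LinearMap.injective_iff_surjective.mp hinj⟩

theorem lifts_of_orbifold_diffeomorphism_are_local_diffeomorphisms_general
    (n : ℕ) (G H : Subgroup (GL (Fin n) ℝ)) [Finite G] [Finite H]
    (f g : (Fin n → ℝ) → (Fin n → ℝ))
    (hf : ContDiff ℝ 1 f) (hg : ContDiff ℝ 1 g)
    (hgf : ∀ x : Fin n → ℝ, ∃ γ ∈ G,
      g (f x) = Matrix.mulVec ((γ : GL (Fin n) ℝ) : Matrix (Fin n) (Fin n) ℝ) x)
    (hfg : ∀ y : Fin n → ℝ, ∃ μ ∈ H,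
      f (g y) = Matrix.mulVec ((μ : GL (Fin n) ℝ) : Matrix (Fin n) (Fin n) ℝ) y) :
    (∀ x : Fin n → ℝ, Function.Bijective (fderiv ℝ f x)) ∧
    (∀ y : Fin n → ℝ, Function.Bijective (fderiv ℝ g y)) := by
  have hdf : Differentiable ℝ f := hf.differentiable one_ne_zero
  have hdg : Differentiable ℝ g := hg.differentiable one_ne_zero
  exact ⟨fun x => bijective_fderiv_of_injective_fderiv_comp (hdf x) (hdg (f x))
      (injective_fderiv_of_forall_exists_mulVec_eq G (hg.comp hf) hgf x),
    fun y => bijective_fderiv_of_injective_fderiv_comp (hdg y) (hdf (g y))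
      (injective_fderiv_of_forall_exists_mulVec_eq H (hf.comp hg) hfg y)⟩

/-- (Lemma 2.2 in linear charts.) If the C¹ maps f and g compose, in both
orders, to lifts of the identity of the quotients ℝⁿ/G and ℝⁿ/H, then f and g are local
diffeomorphisms: all their differentials are invertible. -/
theorem lifts_of_orbifold_diffeomorphism_are_local_diffeomorphisms
    (n : ℕ) (hn : 1 ≤ n) (G H : Subgroup (GL (Fin n) ℝ)) [Finite G] [Finite H]
    (f g : (Fin n → ℝ) → (Fin n → ℝ))
    (hf : ContDiff ℝ 1 f) (hg : ContDiff ℝ 1 g)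
    (hgf : ∀ x : Fin n → ℝ, ∃ γ ∈ G,
      g (f x) = Matrix.mulVec ((γ : GL (Fin n) ℝ) : Matrix (Fin n) (Fin n) ℝ) x)
    (hfg : ∀ y : Fin n → ℝ, ∃ μ ∈ H,
      f (g y) = Matrix.mulVec ((μ : GL (Fin n) ℝ) : Matrix (Fin n) (Fin n) ℝ) y) :
    (∀ x : Fin n → ℝ, Function.Bijective (fderiv ℝ f x)) ∧
    (∀ y : Fin n → ℝ, Function.Bijective (fderiv ℝ g y)) :=
  lifts_of_orbifold_diffeomorphism_are_local_diffeomorphisms_general n G H f g hf hg hgf hfg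
end
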